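/- Let X be a real normed space and Φ : X → ℝ Fréchet differentiable on X, with derivative DΦ(v) ∈ X* at each v. Define Ψ : X → ℝ by Ψ(v) = DΦ(v)(v). Let u ∈ X be such that Ψ is Fréchet differentiable at u, Ψ(u) = 0 and DΨ(u)(u) ≠ 0. If there exists ω ∈ ℝ with DΦ(u) = ω·DΨ(u), then DΦ(u) = 0. -/
import Mathlib

/-- The Nehari manifold is a natural constraint (abstract form):
if `Φ` is Fréchet differentiable with derivative `DΦ`, `Ψ(v) = DΦ(v)(v)` is
differentiable at `u` with derivative `DΨ`, `Ψ(u) = 0`, `DΨ(u)(u) ≠ 0`, and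
`DΦ(u) = ω • DΨ(u)` for some `ω ∈ ℝ`, then `DΦ(u) = 0`. -/
theorem stmt13
    (X : Type*) [NormedAddCommGroup X] [NormedSpace ℝ X]
    (Φ : X → ℝ) (DΦ : X → X →L[ℝ] ℝ)
    (hΦ : ∀ v : X, HasFDerivAt Φ (DΦ v) v)
    (u : X) (DΨ : X →L[ℝ] ℝ)
    (hΨdiff : HasFDerivAt (fun v : X => DΦ v v) DΨ u)
    (hΨu : DΦ u u = 0)
    (hDΨu : DΨ u ≠ 0)
    (ω : ℝ) (hω : DΦ u = ω • DΨ) :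
    DΦ u = 0 := by
  have h : DΦ u u = ω * DΨ u := by rw [hω]; simp
  have hω0 : ω = 0 := by
    rcases mul_eq_zero.mp (h ▸ hΨu) with h0 | h0
    · exact h0
    · exact absurd h0 hDΨu
  rw [hω, hω0, zero_smul]
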